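/- Let m ≥ 1 and let D_0, D_1, D_2 be m × m complex matrices such that Δ(x_0,x_1,x_2) = det(x_0 D_0 + x_1 D_1 + x_2 D_2) is irreducible in the polynomial ring ℂ[x_0,x_1,x_2]. Then for every n ≥ 1, the principal subspace V_n has complex dimension n·m. -/

import Mathlib

/-- Multi-indices `α ∈ ℕ³` (as triples) of total degree `k`. -/
abbrev TriIdx (k : ℕ) : Type := {α : ℕ × ℕ × ℕ // α.1 + α.2.1 + α.2.2 = k}

/-- The determinant of the matrix pencil `x₀ D₀ + x₁ D₁ + x₂ D₂`, as a polynomial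
`Δ(x₀,x₁,x₂) ∈ ℂ[x₀,x₁,x₂]`. -/
noncomputable def pencilPoly (m : ℕ) (D₀ D₁ D₂ : Matrix (Fin m) (Fin m) ℂ) :
    MvPolynomial (Fin 3) ℂ :=
  Matrix.det (Matrix.of fun i j =>
    MvPolynomial.X (0 : Fin 3) * MvPolynomial.C (D₀ i j) +
    MvPolynomial.X (1 : Fin 3) * MvPolynomial.C (D₁ i j) +
    MvPolynomial.X (2 : Fin 3) * MvPolynomial.C (D₂ i j))

/-- The linear constraint map on the blown space `W_n = {(w_α)_{|α|=n−1}, w_α ∈ ℂ^m}`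
whose kernel is the principal subspace `V_n`:
`w ↦ (D₀ w_{γ+(1,0,0)} + D₁ w_{γ+(0,1,0)} + D₂ w_{γ+(0,0,1)})_{|γ| = n−2}`. -/
noncomputable def constraintMap (m n : ℕ) (D₀ D₁ D₂ : Matrix (Fin m) (Fin m) ℂ) :
    (TriIdx (n - 1) → Fin m → ℂ) →ₗ[ℂ]
      ({γ : ℕ × ℕ × ℕ // γ.1 + γ.2.1 + γ.2.2 + 2 = n} → Fin m → ℂ) where
  toFun w γ :=
    D₀.mulVec (w ⟨(γ.1.1 + 1, γ.1.2.1, γ.1.2.2), by have := γ.2; dsimp only; omega⟩) +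
    D₁.mulVec (w ⟨(γ.1.1, γ.1.2.1 + 1, γ.1.2.2), by have := γ.2; dsimp only; omega⟩) +
    D₂.mulVec (w ⟨(γ.1.1, γ.1.2.1, γ.1.2.2 + 1), by have := γ.2; dsimp only; omega⟩)
  map_add' w₁ w₂ := by
    funext γ
    simp only [Pi.add_apply, Matrix.mulVec_add]
    abel
  map_smul' c w := by
    funext γ
    simp only [Pi.smul_apply, Matrix.mulVec_smul, RingHom.id_apply, smul_add]

namespace S11

open MvPolynomial Matrix

abbrev Tgt (n : ℕ) : Type := {γ : ℕ × ℕ × ℕ // γ.1 + γ.2.1 + γ.2.2 + 2 = n}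

noncomputable instance instFinTri (k : ℕ) : Fintype (TriIdx k) :=
  Fintype.ofInjective
    (fun α => ((⟨α.1.1, by have := α.2; omega⟩ : Fin (k+1)),
               (⟨α.1.2.1, by have := α.2; omega⟩ : Fin (k+1)),
               (⟨α.1.2.2, by have := α.2; omega⟩ : Fin (k+1))))
    (by
      rintro ⟨⟨a,b,c⟩,h⟩ ⟨⟨a',b',c'⟩,h'⟩ he
      simp only [Prod.mk.injEq, Fin.mk.injEq] at he
      simp only [Subtype.mk.injEq, Prod.mk.injEq]
      exact ⟨he.1, he.2.1, he.2.2⟩)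

noncomputable instance instFinTgt (n : ℕ) : Fintype (Tgt n) :=
  Fintype.ofInjective
    (fun α => ((⟨α.1.1, by have := α.2; omega⟩ : Fin (n+1)),
               (⟨α.1.2.1, by have := α.2; omega⟩ : Fin (n+1)),
               (⟨α.1.2.2, by have := α.2; omega⟩ : Fin (n+1))))
    (by
      rintro ⟨⟨a,b,c⟩,h⟩ ⟨⟨a',b',c'⟩,h'⟩ he
      simp only [Prod.mk.injEq, Fin.mk.injEq] at he
      simp only [Subtype.mk.injEq, Prod.mk.injEq]
      exact ⟨he.1, he.2.1, he.2.2⟩)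

def triSplit (k : ℕ) : TriIdx (k+1) ≃ (TriIdx k) ⊕ (Fin (k+2)) where
  toFun α := if h : α.1.1 = 0 then Sum.inr ⟨α.1.2.1, by have := α.2; omega⟩
    else Sum.inl ⟨(α.1.1 - 1, α.1.2.1, α.1.2.2), by have := α.2; dsimp only; omega⟩
  invFun x := x.elim
    (fun γ => ⟨(γ.1.1 + 1, γ.1.2.1, γ.1.2.2), by have := γ.2; dsimp only; omega⟩)
    (fun j => ⟨(0, j.1, k + 1 - j.1), by have := j.2; dsimp only; omega⟩)
  left_inv := by
    rintro ⟨⟨a,b,c⟩,h⟩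
    by_cases h0 : a = 0
    · subst h0
      simp only [dif_pos rfl, dite_true, Sum.elim_inr, Subtype.mk.injEq, Prod.mk.injEq,
        Fin.val_mk]
      have h' : 0 + b + c = k + 1 := h
      refine ⟨trivial, trivial, ?_⟩
      show k + 1 - b = c
      omega
    · simp only [dif_neg h0, Sum.elim_inl, Subtype.mk.injEq, Prod.mk.injEq]
      have h' : a + b + c = k + 1 := h
      exact ⟨by omega, trivial⟩
  right_inv := by
    rintro (⟨⟨a,b,c⟩,h⟩ | ⟨j,hj⟩)
    · have ha : a + 1 ≠ 0 := by omega
      simp [ha]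
    · simp

theorem card_tri_succ (k : ℕ) :
    Fintype.card (TriIdx (k+1)) = Fintype.card (TriIdx k) + (k+2) := by
  simpa using Fintype.card_congr (triSplit k)

theorem card_tri_zero : Fintype.card (TriIdx 0) = 1 := by
  have : Unique (TriIdx 0) :=
    { default := ⟨(0,0,0), rfl⟩
      uniq := by
        rintro ⟨⟨a,b,c⟩,h⟩
        simp only at h
        simp only [Subtype.mk.injEq, Prod.mk.injEq]
        refine ⟨by omega, by omega, by omega⟩ }
  exact Fintype.card_unique

def tgtEquiv (n : ℕ) : Tgt (n+2) ≃ TriIdx n where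
  toFun γ := ⟨γ.1, by have := γ.2; omega⟩
  invFun γ := ⟨γ.1, by have := γ.2; omega⟩
  left_inv γ := rfl
  right_inv γ := rfl

instance instEmptyTgt : IsEmpty (Tgt 1) :=
  ⟨by rintro ⟨⟨a,b,c⟩,h⟩; simp only at h; omega⟩

theorem card_eq (n : ℕ) (hn : 1 ≤ n) :
    Fintype.card (TriIdx (n-1)) = Fintype.card (Tgt n) + n := by
  obtain (rfl | hn2) : n = 1 ∨ 2 ≤ n := by omega
  · show Fintype.card (TriIdx 0) = Fintype.card (Tgt 1) + 1
    rw [card_tri_zero, Fintype.card_eq_zero]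
  obtain ⟨k, rfl⟩ : ∃ k, n = k + 2 := ⟨n - 2, by omega⟩
  have h1 : k + 2 - 1 = k + 1 := by omega
  rw [h1, card_tri_succ, Fintype.card_congr (tgtEquiv k)]


variable {m : ℕ} (D₀ D₁ D₂ : Matrix (Fin m) (Fin m) ℂ)

/-- the three pencil matrices -/
def Dmat (i : Fin 3) : Matrix (Fin m) (Fin m) ℂ :=
  if i = 0 then D₀ else if i = 1 then D₁ else D₂

/-- add the `i`-th unit vector to a multi-index -/
def addE (i : Fin 3) (γ : ℕ × ℕ × ℕ) : ℕ × ℕ × ℕ :=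
  if i = 0 then (γ.1 + 1, γ.2.1, γ.2.2)
  else if i = 1 then (γ.1, γ.2.1 + 1, γ.2.2)
  else (γ.1, γ.2.1, γ.2.2 + 1)

lemma addE_sum (i : Fin 3) (γ : ℕ × ℕ × ℕ) :
    (addE i γ).1 + (addE i γ).2.1 + (addE i γ).2.2 = γ.1 + γ.2.1 + γ.2.2 + 1 := by
  fin_cases i <;> simp [addE] <;> omega

/-- multi-index as a finsupp on `Fin 3` -/
noncomputable def ι3 (γ : ℕ × ℕ × ℕ) : Fin 3 →₀ ℕ :=
  Finsupp.single 0 γ.1 + Finsupp.single 1 γ.2.1 + Finsupp.single 2 γ.2.2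

lemma ι3_inj : Function.Injective ι3 := by
  rintro ⟨a,b,c⟩ ⟨a',b',c'⟩ h
  have h0 : ι3 (a,b,c) 0 = ι3 (a',b',c') 0 := by rw [h]
  have h1 : ι3 (a,b,c) 1 = ι3 (a',b',c') 1 := by rw [h]
  have h2 : ι3 (a,b,c) 2 = ι3 (a',b',c') 2 := by rw [h]
  simp [ι3, Finsupp.single_apply] at h0 h1 h2
  simp only [Prod.mk.injEq]
  exact ⟨h0, h1, h2⟩

lemma ι3_addE (i : Fin 3) (γ : ℕ × ℕ × ℕ) :
    ι3 (addE i γ) = Finsupp.single i 1 + ι3 γ := by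
  fin_cases i <;>
    · ext j
      fin_cases j <;> simp [ι3, addE, Finsupp.single_apply] <;> omega

/-- the `i`-th shift, as a map `Tgt n → TriIdx (n-1)` -/
def shiftT {n : ℕ} (i : Fin 3) (γ : Tgt n) : TriIdx (n - 1) :=
  ⟨addE i γ.1, by have h := γ.2; have := addE_sum i γ.1; omega⟩

/-- the matrix pencil, as a matrix of polynomials -/
noncomputable def pencil : Matrix (Fin m) (Fin m) (MvPolynomial (Fin 3) ℂ) :=
  Matrix.of fun i j => ∑ k : Fin 3, X k * C (Dmat D₀ D₁ D₂ k i j)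

lemma pencil_det : (pencil D₀ D₁ D₂).det = pencilPoly m D₀ D₁ D₂ := by
  unfold pencil pencilPoly
  congr 1
  ext i j
  rw [Matrix.of_apply, Fin.sum_univ_three]
  simp [Dmat]

lemma X_C_mul_monomial (i : Fin 3) (a b : ℂ) (d : Fin 3 →₀ ℕ) :
    (X i * C a) * monomial d b = monomial (Finsupp.single i 1 + d) (a * b) := by
  rw [X, C_apply, monomial_mul, monomial_mul, one_mul, add_zero]

theorem key {n : ℕ} (hΔ : pencilPoly m D₀ D₁ D₂ ≠ 0)
    (v : Tgt n → Fin m → ℂ)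
    (H : ∀ (α : TriIdx (n-1)) (s : Fin m),
      (∑ γ : Tgt n, ∑ i : Fin 3,
        if shiftT i γ = α then ∑ r, Dmat D₀ D₁ D₂ i r s * v γ r else 0) = 0) :
    v = 0 := by
  set q : Fin m → MvPolynomial (Fin 3) ℂ :=
    fun r => ∑ γ : Tgt n, monomial (ι3 γ.1) (v γ r) with hq
  have hPq : (pencil D₀ D₁ D₂)ᵀ.mulVec q = 0 := by
    funext s
    have e1 : (pencil D₀ D₁ D₂)ᵀ.mulVec q s = ∑ r, pencil D₀ D₁ D₂ r s * q r := by
      simp [Matrix.mulVec, dotProduct, Matrix.transpose_apply]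
    rw [e1]
    calc ∑ r, pencil D₀ D₁ D₂ r s * q r
        = ∑ r, ∑ i : Fin 3, ∑ γ : Tgt n,
            monomial (Finsupp.single i 1 + ι3 γ.1) (Dmat D₀ D₁ D₂ i r s * v γ r) := by
          refine Finset.sum_congr rfl fun r _ => ?_
          rw [pencil, Matrix.of_apply, Finset.sum_mul]
          refine Finset.sum_congr rfl fun i _ => ?_
          simp only [hq]
          rw [Finset.mul_sum]
          exact Finset.sum_congr rfl fun γ _ => X_C_mul_monomial ..
      _ = ∑ i : Fin 3, ∑ r, ∑ γ : Tgt n,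
            monomial (Finsupp.single i 1 + ι3 γ.1) (Dmat D₀ D₁ D₂ i r s * v γ r) :=
          Finset.sum_comm
      _ = ∑ i : Fin 3, ∑ γ : Tgt n, ∑ r,
            monomial (Finsupp.single i 1 + ι3 γ.1) (Dmat D₀ D₁ D₂ i r s * v γ r) :=
          Finset.sum_congr rfl fun i _ => Finset.sum_comm
      _ = ∑ γ : Tgt n, ∑ i : Fin 3, ∑ r,
            monomial (Finsupp.single i 1 + ι3 γ.1) (Dmat D₀ D₁ D₂ i r s * v γ r) :=
          Finset.sum_comm
      _ = ∑ γ : Tgt n, ∑ i : Fin 3,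
            monomial (ι3 (shiftT i γ).1) (∑ r, Dmat D₀ D₁ D₂ i r s * v γ r) := by
          refine Finset.sum_congr rfl fun γ _ => Finset.sum_congr rfl fun i _ => ?_
          rw [← map_sum, shiftT, ι3_addE]
      _ = ∑ γ : Tgt n, ∑ i : Fin 3, ∑ α : TriIdx (n-1),
            if shiftT i γ = α then
              monomial (ι3 α.1) (∑ r, Dmat D₀ D₁ D₂ i r s * v γ r) else 0 := by
          refine Finset.sum_congr rfl fun γ _ => Finset.sum_congr rfl fun i _ => ?_
          rw [Finset.sum_ite_eq]
          simp
      _ = ∑ γ : Tgt n, ∑ α : TriIdx (n-1), ∑ i : Fin 3,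
            if shiftT i γ = α then
              monomial (ι3 α.1) (∑ r, Dmat D₀ D₁ D₂ i r s * v γ r) else 0 :=
          Finset.sum_congr rfl fun γ _ => Finset.sum_comm
      _ = ∑ α : TriIdx (n-1), ∑ γ : Tgt n, ∑ i : Fin 3,
            if shiftT i γ = α then
              monomial (ι3 α.1) (∑ r, Dmat D₀ D₁ D₂ i r s * v γ r) else 0 :=
          Finset.sum_comm
      _ = ∑ α : TriIdx (n-1), monomial (ι3 α.1)
            (∑ γ : Tgt n, ∑ i : Fin 3,
              if shiftT i γ = α then ∑ r, Dmat D₀ D₁ D₂ i r s * v γ r else 0) := by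
          refine Finset.sum_congr rfl fun α _ => ?_
          rw [map_sum]
          refine Finset.sum_congr rfl fun γ _ => ?_
          rw [map_sum]
          refine Finset.sum_congr rfl fun i _ => ?_
          split <;> simp
      _ = 0 := by
          simp only [H]
          simp
  have hdet : (pencil D₀ D₁ D₂)ᵀ.det ≠ 0 := by
    rw [Matrix.det_transpose, pencil_det]; exact hΔ
  have hq0 : ∀ r, q r = 0 := by
    have h2 := congrArg (Matrix.mulVec (Matrix.adjugate (pencil D₀ D₁ D₂)ᵀ)) hPq
    rw [Matrix.mulVec_mulVec, Matrix.adjugate_mul, Matrix.smul_mulVec,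
      Matrix.one_mulVec, Matrix.mulVec_zero] at h2
    intro r
    have h3 : (pencil D₀ D₁ D₂)ᵀ.det * q r = 0 := congrFun h2 r
    rcases mul_eq_zero.mp h3 with h4 | h4
    · exact absurd h4 hdet
    · exact h4
  funext γ r
  have hc : coeff (ι3 γ.1) (q r) = v γ r := by
    simp only [hq]
    rw [MvPolynomial.coeff_sum]
    rw [Finset.sum_eq_single γ]
    · simp [coeff_monomial]
    · intro γ' _ hne
      rw [coeff_monomial, if_neg]
      exact fun h => hne (Subtype.ext (ι3_inj h))
    · simp
  rw [hq0 r] at hc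
  simpa using hc.symm

lemma dual_expand {ι κ : Type*} [Fintype ι] [Fintype κ] [DecidableEq ι] [DecidableEq κ]
    (φ : Module.Dual ℂ (ι → κ → ℂ)) (u : ι → κ → ℂ) :
    φ u = ∑ i, ∑ j, u i j * φ (Pi.single i (Pi.single j 1)) := by
  conv_lhs => rw [← Finset.univ_sum_single u, map_sum]
  refine Finset.sum_congr rfl fun i _ => ?_
  have hui : u i = ∑ j, u i j • (Pi.single j 1 : κ → ℂ) := by
    conv_lhs => rw [← Finset.univ_sum_single (u i)]
    refine Finset.sum_congr rfl fun j _ => ?_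
    rw [← Pi.single_smul, smul_eq_mul, mul_one]
  have hu : Pi.single (M := fun _ : ι => κ → ℂ) i (u i)
      = ∑ j, u i j • (Pi.single i (Pi.single j 1 : κ → ℂ) : ι → κ → ℂ) := by
    calc Pi.single (M := fun _ : ι => κ → ℂ) i (u i)
        = LinearMap.single ℂ (fun _ : ι => κ → ℂ) i (∑ j, u i j • (Pi.single j 1 : κ → ℂ)) := by
          rw [← hui]; rfl
      _ = ∑ j, u i j • (Pi.single i (Pi.single j 1 : κ → ℂ) : ι → κ → ℂ) := by
          rw [map_sum]
          exact Finset.sum_congr rfl fun j _ => (LinearMap.single ℂ (fun _ : ι => κ → ℂ) i).map_smul _ _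
  rw [hu, map_sum]
  refine Finset.sum_congr rfl fun j _ => ?_
  rw [_root_.map_smul, smul_eq_mul]

lemma constraintMap_apply (n : ℕ) (w : TriIdx (n-1) → Fin m → ℂ) (γ : Tgt n) :
    constraintMap m n D₀ D₁ D₂ w γ
      = ∑ i : Fin 3, (Dmat D₀ D₁ D₂ i).mulVec (w (shiftT i γ)) := by
  have e0 : shiftT (n := n) 0 γ
      = ⟨(γ.1.1 + 1, γ.1.2.1, γ.1.2.2), by have := γ.2; dsimp only; omega⟩ :=
    Subtype.ext (by simp [shiftT, addE])
  have e1 : shiftT (n := n) 1 γ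
      = ⟨(γ.1.1, γ.1.2.1 + 1, γ.1.2.2), by have := γ.2; dsimp only; omega⟩ :=
    Subtype.ext (by simp [shiftT, addE])
  have e2 : shiftT (n := n) 2 γ
      = ⟨(γ.1.1, γ.1.2.1, γ.1.2.2 + 1), by have := γ.2; dsimp only; omega⟩ :=
    Subtype.ext (by simp [shiftT, addE])
  rw [Fin.sum_univ_three, e0, e1, e2]
  rfl

/-- constraintMap is a noncomputable def, hidden behind structure eta -/
theorem surj {n : ℕ} (hΔ : pencilPoly m D₀ D₁ D₂ ≠ 0) :
    Function.Surjective (constraintMap m n D₀ D₁ D₂) := by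
  rw [← LinearMap.dualMap_injective_iff, ← LinearMap.ker_eq_bot, LinearMap.ker_eq_bot']
  intro φ hφ
  set f := constraintMap m n D₀ D₁ D₂ with hf
  set v : Tgt n → Fin m → ℂ := fun γ r => φ (Pi.single γ (Pi.single r 1)) with hv
  have hfw : ∀ (α : TriIdx (n-1)) (s : Fin m) (γ : Tgt n) (r : Fin m),
      f (Pi.single α (Pi.single s 1)) γ r
        = ∑ i : Fin 3, if shiftT i γ = α then Dmat D₀ D₁ D₂ i r s else 0 := by
    intro α s γ r
    rw [hf, constraintMap_apply]
    rw [show (∑ i : Fin 3, (Dmat D₀ D₁ D₂ i).mulVec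
        ((Pi.single α (Pi.single s 1) : TriIdx (n-1) → Fin m → ℂ) (shiftT i γ))) r
      = ∑ i : Fin 3, ((Dmat D₀ D₁ D₂ i).mulVec
        ((Pi.single α (Pi.single s 1) : TriIdx (n-1) → Fin m → ℂ) (shiftT i γ))) r
      from Finset.sum_apply r _ _]
    refine Finset.sum_congr rfl fun i _ => ?_
    rw [Pi.single_apply]
    split
    · simp
    · simp
  have H : ∀ (α : TriIdx (n-1)) (s : Fin m),
      (∑ γ : Tgt n, ∑ i : Fin 3,
        if shiftT i γ = α then ∑ r, Dmat D₀ D₁ D₂ i r s * v γ r else 0) = 0 := by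
    intro α s
    have h1 : φ (f (Pi.single α (Pi.single s 1))) = 0 := by
      have h := DFunLike.congr_fun hφ (Pi.single α (Pi.single s 1))
      simpa using h
    rw [dual_expand] at h1
    refine Eq.trans (Finset.sum_congr rfl fun γ _ => ?_) h1
    refine Eq.symm ?_
    calc ∑ r, f (Pi.single α (Pi.single s 1)) γ r * v γ r
        = ∑ r, ∑ i : Fin 3,
            if shiftT i γ = α then Dmat D₀ D₁ D₂ i r s * v γ r else 0 := by
          refine Finset.sum_congr rfl fun r _ => ?_
          rw [hfw, Finset.sum_mul]
          exact Finset.sum_congr rfl fun i _ => by rw [ite_mul, zero_mul]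
      _ = ∑ i : Fin 3, ∑ r,
            if shiftT i γ = α then Dmat D₀ D₁ D₂ i r s * v γ r else 0 :=
          Finset.sum_comm
      _ = ∑ i : Fin 3,
            if shiftT i γ = α then ∑ r, Dmat D₀ D₁ D₂ i r s * v γ r else 0 := by
          refine Finset.sum_congr rfl fun i _ => ?_
          split <;> simp
  have hv0 := key D₀ D₁ D₂ hΔ v H
  refine LinearMap.ext fun u => ?_
  rw [dual_expand]
  have hz : ∀ (γ : Tgt n) (r : Fin m), φ (Pi.single γ (Pi.single r 1)) = 0 := by
    intro γ r
    have := congrFun (congrFun hv0 γ) r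
    simpa [hv] using this
  simp [hz]

end S11


/-- If `Δ(x₀,x₁,x₂) = det(x₀D₀ + x₁D₁ + x₂D₂)` is irreducible, then for
every `n ≥ 1` the principal subspace `V_n` (the kernel of the constraint map on the blown
space `W_n`) has complex dimension `n·m`. -/
theorem principal_subspace_finrank
    (m : ℕ) (hm : 1 ≤ m) (D₀ D₁ D₂ : Matrix (Fin m) (Fin m) ℂ)
    (hirr : Irreducible (pencilPoly m D₀ D₁ D₂)) :
    ∀ n : ℕ, 1 ≤ n →
      Module.finrank ℂ (LinearMap.ker (constraintMap m n D₀ D₁ D₂)) = n * m := by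
  intro n hn
  have hΔ : pencilPoly m D₀ D₁ D₂ ≠ 0 := by
    intro h; rw [h] at hirr; exact not_irreducible_zero hirr
  have hs := S11.surj D₀ D₁ D₂ hΔ (n := n)
  have hrank := LinearMap.finrank_range_add_finrank_ker (constraintMap m n D₀ D₁ D₂)
  rw [LinearMap.range_eq_top.mpr hs, finrank_top] at hrank
  have hW : Module.finrank ℂ (TriIdx (n-1) → Fin m → ℂ)
      = Fintype.card (TriIdx (n-1)) * m := by
    rw [Module.finrank_pi_fintype]
    simp [Module.finrank_pi]
  have hU : Module.finrank ℂ (S11.Tgt n → Fin m → ℂ)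
      = Fintype.card (S11.Tgt n) * m := by
    rw [Module.finrank_pi_fintype]
    simp [Module.finrank_pi]
  rw [hW, hU] at hrank
  have hc : Fintype.card (TriIdx (n-1)) * m = Fintype.card (S11.Tgt n) * m + n * m := by
    rw [S11.card_eq n hn, add_mul]
  omega
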